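/- arXiv:1712.07021 — 4 statements merged into one kernel-verified Lean document; each statement's English description precedes it below -/
import Mathlib

section
/- For integers K ≥ 2 and N ≥ 2, the achievable normalized download cost at caching ratio r_1 = 1/N^{K-1} equals (N^K - K·N + K - 1) / (N^K - N^{K-1}); that is, (∑_{i=0}^{K-2} binom(K, 2+i)(N-1)^{i+1}) / (1 + ∑_{i=0}^{K-2} binom(K-1, 1+i)(N-1)^{i+1}) = (N^K - KN + K - 1)/(N^K - N^{K-1}). -/
theorem stmt_2 (K N : ℕ) (hK : 2 ≤ K) (hN : 2 ≤ N) :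
    (∑ i ∈ Finset.range (K - 1), (K.choose (2 + i) : ℝ) * ((N : ℝ) - 1) ^ (i + 1)) /
        (1 + ∑ i ∈ Finset.range (K - 1), ((K - 1).choose (1 + i) : ℝ) * ((N : ℝ) - 1) ^ (i + 1))
      = ((N : ℝ) ^ K - (K : ℝ) * N + K - 1) / ((N : ℝ) ^ K - (N : ℝ) ^ (K - 1)) := by
  set x : ℝ := (N : ℝ) - 1 with hx
  clear_value x
  have hN2 : (2:ℝ) ≤ (N:ℝ) := by exact_mod_cast hN
  have hx0 : (0:ℝ) < x := by rw [hx]; linarith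
  have hxN : x + 1 = (N : ℝ) := by rw [hx]; ring
  have hbin : ∀ m : ℕ, (x + 1) ^ m = ∑ j ∈ Finset.range (m + 1), (m.choose j : ℝ) * x ^ j := by
    intro m
    rw [add_pow]
    exact Finset.sum_congr rfl fun j _ => by ring
  -- denominator
  have hden : 1 + ∑ i ∈ Finset.range (K - 1), ((K - 1).choose (1 + i) : ℝ) * x ^ (i + 1)
      = (x + 1) ^ (K - 1) := by
    rw [hbin (K - 1), Finset.sum_range_succ']
    simp [add_comm]
  -- numerator
  have hnum : x * (∑ i ∈ Finset.range (K - 1), (K.choose (2 + i) : ℝ) * x ^ (i + 1))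
      = (x + 1) ^ K - 1 - (K : ℝ) * x := by
    have hK2 : K + 1 = (K - 1) + 1 + 1 := by omega
    have step : ∀ i ∈ Finset.range (K - 1),
        x * ((K.choose (2 + i) : ℝ) * x ^ (i + 1)) = (K.choose (i + 1 + 1) : ℝ) * x ^ (i + 1 + 1) := by
      intro i _
      rw [show 2 + i = i + 1 + 1 from by omega]
      ring
    rw [hbin K, hK2, Finset.sum_range_succ', Finset.sum_range_succ', Finset.mul_sum,
      Finset.sum_congr rfl step]
    have hc1 : (K.choose 1 : ℝ) = K := by simp
    have hc0 : (K.choose 0 : ℝ) = 1 := by simp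
    rw [hc1, hc0]
    ring
  have hNpow : (N : ℝ) ^ (K - 1) = (x + 1) ^ (K - 1) := by rw [hxN]
  have hNK : (N : ℝ) ^ K = (x + 1) ^ (K - 1) * (x + 1) := by
    rw [hxN, ← pow_succ]
    congr 1
    omega
  have hP0 : (x + 1) ^ (K - 1) ≠ 0 := by positivity
  have hKpow : (x + 1) ^ K = (x + 1) ^ (K - 1) * (x + 1) := by
    rw [← pow_succ]; congr 1; omega
  rw [hKpow] at hnum
  rw [hden, hNK, hNpow, ← hxN,
    div_eq_div_iff hP0 (by nlinarith [pow_pos (by linarith : (0:ℝ) < x + 1) (K-1)])]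
  linear_combination ((x + 1) ^ (K - 1)) * hnum
end

section
/- For every integer i ≥ 1, the quantity g(i) = 2^{-i} · (i - 2·(1 - 2^{-i})) satisfies g(i) ≤ 5/32, with equality at i = 3. -/
lemma aux_nat (i : ℕ) (hi : 4 ≤ i) : 32 * i ≤ 5 * 2 ^ i + 60 := by
  induction i, hi using Nat.le_induction with
  | base => norm_num
  | succ n hn ih =>
    have h2 : 16 ≤ 2 ^ n := by
      calc (16 : ℕ) = 2 ^ 4 := by norm_num
      _ ≤ 2 ^ n := Nat.pow_le_pow_right (by norm_num) hn
    have : 2 ^ (n + 1) = 2 * 2 ^ n := by ring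
    omega

theorem stmt_14 :
    (∀ i : ℕ, 1 ≤ i →
      (1 / (2 : ℝ) ^ i) * ((i : ℝ) - 2 * (1 - 1 / (2 : ℝ) ^ i)) ≤ 5 / 32) ∧
    (1 / (2 : ℝ) ^ 3) * ((3 : ℝ) - 2 * (1 - 1 / (2 : ℝ) ^ 3)) = 5 / 32 := by
  constructor
  · intro i hi
    by_cases h4 : i ≤ 3
    · interval_cases i <;> norm_num
    · push_neg at h4
      have hi4 : 4 ≤ i := h4
      have hp : (0 : ℝ) < 2 ^ i := by positivity
      have h16 : (16 : ℝ) ≤ 2 ^ i := by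
        calc (16 : ℝ) = 2 ^ 4 := by norm_num
        _ ≤ 2 ^ i := by exact pow_le_pow_right₀ (by norm_num) hi4
      have hkey : (32 : ℝ) * i ≤ 5 * 2 ^ i + 60 := by
        have := aux_nat i hi4
        exact_mod_cast this
      rw [div_mul_eq_mul_div, div_le_div_iff₀ hp (by norm_num)]
      have h2 : (2 : ℝ) / 2 ^ i ≤ 1 / 8 := by
        rw [div_le_div_iff₀ hp (by norm_num)]; linarith
      have hinv : 1 / (2:ℝ)^i = (2 / 2^i) / 2 := by ring
      nlinarith [mul_pos hp hp, sq_nonneg ((2:ℝ)^i - 16)]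
  · norm_num
end

section
/- For each fixed integer i ≥ 1, the function N ↦ (1/N^i) · (i - (1 - N^{-i})/(1 - 1/N)) is monotonically nonincreasing in N for integers N ≥ 2. -/
private lemma stmt15_D (b : ℕ) (x y : ℝ) (hx : 0 ≤ x) (hxy : x ≤ y)
    (hsum : x + y ≤ 1) : x ^ (b + 1) - x ^ (b + 2) ≤ y ^ (b + 1) - y ^ (b + 2) := by
  have hy0 : 0 ≤ y := hx.trans hxy
  have hpb : x ^ b ≤ y ^ b := pow_le_pow_left₀ hx hxy b
  have hxb : 0 ≤ x ^ b := pow_nonneg hx b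
  have hA : x ^ b * (y - x) ≤ y ^ (b + 1) - x ^ (b + 1) := by
    have h1 : 0 ≤ y * (y ^ b - x ^ b) := mul_nonneg hy0 (sub_nonneg.2 hpb)
    have : y ^ (b + 1) - x ^ (b + 1) = y * (y ^ b - x ^ b) + x ^ b * (y - x) := by
      ring
    linarith
  have hx1y : x ≤ 1 - y := by linarith
  -- (1 - y) * (y^(b+1) - x^(b+1)) ≥ (1-y) * x^b * (y-x) ≥ x * x^b * (y - x)
  have h2 : x * (x ^ b * (y - x)) ≤ (1 - y) * (y ^ (b + 1) - x ^ (b + 1)) := by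
    have h3 : 0 ≤ x ^ b * (y - x) := mul_nonneg hxb (by linarith)
    calc x * (x ^ b * (y - x)) ≤ (1 - y) * (x ^ b * (y - x)) := by
          apply mul_le_mul_of_nonneg_right hx1y h3
      _ ≤ (1 - y) * (y ^ (b + 1) - x ^ (b + 1)) := by
          apply mul_le_mul_of_nonneg_left hA (by linarith)
  have hexp : y ^ (b + 2) - x ^ (b + 2) = y * (y ^ (b + 1) - x ^ (b + 1))
      + x ^ (b + 1) * (y - x) := by ring
  have hxb1 : x ^ (b + 1) = x * x ^ b := by ring
  nlinarith [hA, h2]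

private lemma stmt15_C (a k : ℕ) (ha : 1 ≤ a) (x y : ℝ) (hx : 0 ≤ x) (hxy : x ≤ y)
    (hsum : x + y ≤ 1) : x ^ a - x ^ (a + k) ≤ y ^ a - y ^ (a + k) := by
  obtain ⟨b, rfl⟩ : ∃ b, a = b + 1 := ⟨a - 1, (Nat.succ_pred_eq_of_pos ha).symm⟩
  induction k with
  | zero => simp
  | succ k ih =>
      have hD := stmt15_D (b + k) x y hx hxy hsum
      have e1 : b + 1 + (k + 1) = (b + k) + 2 := by ring
      have e2 : b + 1 + k = (b + k) + 1 := by ring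
      rw [e1]
      rw [e2] at ih
      linarith

private lemma stmt15_expr (x : ℝ) (hx1 : x ≠ 1) (i : ℕ) :
    x ^ i * ((i : ℝ) - (1 - x ^ i) / (1 - x))
      = ∑ k ∈ Finset.range i, (x ^ i - x ^ (i + k)) := by
  have h : (1 - x ^ i) / (1 - x) = ∑ k ∈ Finset.range i, x ^ k := by
    rw [geom_sum_eq hx1]
    rw [← neg_sub 1 x, ← neg_sub 1 (x ^ i), neg_div_neg_eq]
  rw [h, Finset.sum_sub_distrib]
  simp only [pow_add, ← Finset.mul_sum, Finset.sum_const, Finset.card_range,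
    nsmul_eq_mul]
  ring

theorem stmt_15 (i : ℕ) (hi : 1 ≤ i) (N M : ℕ) (hN : 2 ≤ N) (hNM : N ≤ M) :
    (1 / (M : ℝ) ^ i) * ((i : ℝ) - (1 - 1 / (M : ℝ) ^ i) / (1 - 1 / (M : ℝ)))
      ≤ (1 / (N : ℝ) ^ i) * ((i : ℝ) - (1 - 1 / (N : ℝ) ^ i) / (1 - 1 / (N : ℝ))) := by
  have hN2 : (2 : ℝ) ≤ (N : ℝ) := by exact_mod_cast hN
  have hM2 : (2 : ℝ) ≤ (M : ℝ) := by exact_mod_cast (hN.trans hNM)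
  have hNM' : (N : ℝ) ≤ (M : ℝ) := by exact_mod_cast hNM
  have hN0 : (0 : ℝ) < (N : ℝ) := by linarith
  have hM0 : (0 : ℝ) < (M : ℝ) := by linarith
  set x : ℝ := 1 / (M : ℝ) with hxdef
  set y : ℝ := 1 / (N : ℝ) with hydef
  have hx0 : 0 ≤ x := by positivity
  have hxy : x ≤ y := one_div_le_one_div_of_le hN0 hNM'
  have hyhalf : y ≤ 1 / 2 := by
    rw [hydef]
    rw [div_le_div_iff₀ hN0 (by norm_num)]
    linarith
  have hsum : x + y ≤ 1 := by linarith
  have hx1 : x ≠ 1 := by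
    have : x ≤ 1 / 2 := hxy.trans hyhalf
    intro h; rw [h] at this; linarith
  have hy1 : y ≠ 1 := by
    intro h; rw [h] at hyhalf; linarith
  have hMx : 1 / (M : ℝ) ^ i = x ^ i := by rw [hxdef, one_div_pow]
  have hNy : 1 / (N : ℝ) ^ i = y ^ i := by rw [hydef, one_div_pow]
  rw [hMx, hNy, stmt15_expr x hx1 i, stmt15_expr y hy1 i]
  apply Finset.sum_le_sum
  intro k _
  exact stmt15_C i k hi x y hx0 hxy hsum
end

section
/- For integers K ≥ 3, N ≥ 2, the corner caching ratios r_s = binom(K-2,s-1)/(binom(K-2,s-1) + ∑_{i=0}^{K-1-s} binom(K-1,s+i)(N-1)^{i+1}) are strictly increasing in s for 1 ≤ s ≤ K-1. -/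
/-- The corner-point caching ratio `r_s` in cache-aided PIR with partially known
uncoded prefetching. -/
noncomputable def cornerRatio (K N s : ℕ) : ℝ :=
  ((K - 2).choose (s - 1) : ℝ) /
    (((K - 2).choose (s - 1) : ℝ) +
      ∑ i ∈ Finset.range (K - s), ((K - 1).choose (s + i) : ℝ) * ((N : ℝ) - 1) ^ (i + 1))

lemma key_choose (m a i : ℕ) (h : a + i + 1 ≤ m) :
    m.choose a * (m+1).choose (a+2+i) ≤ m.choose (a+1) * (m+1).choose (a+1+i) := by
  have h1 := Nat.choose_succ_right_eq (m+1) (a+1+i)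
  have h2 := Nat.choose_succ_right_eq m a
  have e1 : a+1+i+1 = a+2+i := by ring
  rw [e1] at h1
  have hm1 : m + 1 - (a+1+i) = m - a - i := by omega
  rw [hm1] at h1
  have key2 : (a+1) * (m - a - i) ≤ (m - a) * (a+2+i) := by
    calc (a+1) * (m - a - i) ≤ (a+1) * (m-a) := Nat.mul_le_mul_left _ (by omega)
      _ ≤ (a+2+i) * (m-a) := Nat.mul_le_mul_right _ (by omega)
      _ = (m-a)*(a+2+i) := by ring
  have pos : 0 < (a+1) * (a+2+i) := by positivity
  apply Nat.le_of_mul_le_mul_right _ pos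
  calc m.choose a * (m+1).choose (a+2+i) * ((a+1)*(a+2+i))
      = (m.choose a * (a+1)) * ((m+1).choose (a+2+i) * (a+2+i)) := by ring
    _ = (m.choose a * (a+1)) * ((m+1).choose (a+1+i) * (m - a - i)) := by rw [h1]
    _ = (m.choose a * (m+1).choose (a+1+i)) * ((a+1) * (m-a-i)) := by ring
    _ ≤ (m.choose a * (m+1).choose (a+1+i)) * ((m-a) * (a+2+i)) := Nat.mul_le_mul_left _ key2
    _ = (m.choose a * (m-a)) * ((m+1).choose (a+1+i)) * (a+2+i) := by ring
    _ = (m.choose (a+1) * (a+1)) * ((m+1).choose (a+1+i)) * (a+2+i) := by rw [h2]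
    _ = m.choose (a+1) * (m+1).choose (a+1+i) * ((a+1)*(a+2+i)) := by ring

theorem stmt_17 (K N : ℕ) (hK : 3 ≤ K) (hN : 2 ≤ N) :
    ∀ s : ℕ, 1 ≤ s → s + 1 ≤ K - 1 → cornerRatio K N s < cornerRatio K N (s + 1) := by
  intro s hs1 hs2
  obtain ⟨a, rfl⟩ : ∃ a, s = a + 1 := ⟨s - 1, by omega⟩
  obtain ⟨m, rfl⟩ : ∃ m, K = m + 3 := ⟨K - 3, by omega⟩
  have ha : a ≤ m := by omega
  set x : ℝ := (N : ℝ) - 1 with hxdef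
  have hN' : (2:ℝ) ≤ (N:ℝ) := by exact_mod_cast hN
  have hx : 1 ≤ x := by rw [hxdef]; linarith
  have hx0 : 0 < x := by linarith
  simp only [cornerRatio]
  have e1 : m + 3 - 2 = m + 1 := by omega
  have e2 : m + 3 - 1 = m + 2 := by omega
  have e3 : a + 1 - 1 = a := by omega
  have e4 : a + 1 + 1 - 1 = a + 1 := by omega
  have e5 : m + 3 - (a + 1) = (m + 1 - a) + 1 := by omega
  have e6 : m + 3 - (a + 1 + 1) = m + 1 - a := by omega
  rw [e1, e2, e3, e4, e5, e6]
  set A1 : ℝ := ((m+1).choose a : ℝ) with hA1def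
  set A2 : ℝ := ((m+1).choose (a+1) : ℝ) with hA2def
  set B1 : ℝ := ∑ i ∈ Finset.range ((m+1-a)+1), ((m+2).choose (a+1+i) : ℝ) * x ^ (i+1) with hB1def
  set B2 : ℝ := ∑ i ∈ Finset.range (m+1-a), ((m+2).choose (a+1+1+i) : ℝ) * x ^ (i+1) with hB2def
  set S : ℝ := ∑ i ∈ Finset.range (m+1-a), ((m+2).choose (a+1+i) : ℝ) * x ^ (i+1) with hSdef
  have hA1 : 0 < A1 := by
    rw [hA1def]; exact_mod_cast Nat.choose_pos (by omega : a ≤ m+1)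
  have hA2 : 0 < A2 := by
    rw [hA2def]; exact_mod_cast Nat.choose_pos (by omega : a+1 ≤ m+1)
  have hB1 : 0 ≤ B1 := Finset.sum_nonneg fun i _ => by positivity
  have hB2 : 0 ≤ B2 := Finset.sum_nonneg fun i _ => by positivity
  rw [div_lt_div_iff₀ (by linarith) (by linarith)]
  have hstep : A1 * B2 ≤ A2 * S := by
    rw [hB2def, hSdef, Finset.mul_sum, Finset.mul_sum]
    apply Finset.sum_le_sum
    intro i hi
    simp only [Finset.mem_range] at hi
    have hkey := key_choose (m+1) a i (by omega)
    have hc : A1 * ((m+2).choose (a+2+i) : ℝ) ≤ A2 * ((m+2).choose (a+1+i) : ℝ) := by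
      rw [hA1def, hA2def]
      exact_mod_cast hkey
    have he : a+1+1+i = a+2+i := by ring
    rw [he]
    have hp : (0:ℝ) < x ^ (i+1) := pow_pos hx0 _
    nlinarith
  have hB1S : B1 = S + ((m+2).choose (a+1+(m+1-a)) : ℝ) * x ^ ((m+1-a)+1) := by
    rw [hB1def, hSdef, Finset.sum_range_succ]
  have hlastidx : a+1+(m+1-a) = m+2 := by omega
  have hlast : ((m+2).choose (a+1+(m+1-a)) : ℝ) = 1 := by
    rw [hlastidx, Nat.choose_self]; norm_num
  have hlastpos : (0:ℝ) < ((m+2).choose (a+1+(m+1-a)) : ℝ) * x ^ ((m+1-a)+1) := by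
    rw [hlast]; simpa using pow_pos hx0 ((m+1-a)+1)
  have hkey2 : A1 * B2 < A2 * B1 := by
    rw [hB1S]
    nlinarith
  nlinarith
end
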